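/- arXiv:0905.2914 — 2 statements merged into one kernel-verified Lean document; each statement's English description precedes it below -/
import Mathlib

section
/- Let φ ∈ C²((0,∞); ℝ) and F > 0. Then for every u ∈ 𝒰, E_a''(y_F)[u,u] = A_F ‖u'‖²_{ℓ²_ε} − ε² φ''(2F) ‖u''‖²_{ℓ²_ε}, where u' and u'' denote the (2N-periodic) backward difference and centered second difference of u. -/
open Finset Real

noncomputable section

/-- The index set `{-N+1, ..., N}` of one period. -/
def idx (N : ℕ) : Finset ℤ := Finset.Icc (-(N : ℤ) + 1) (N : ℤ)

/-- The space 𝒰 of 2N-periodic displacements with zero mean. -/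
def uSet (N : ℕ) : Set (ℤ → ℝ) :=
  {u | (∀ ℓ : ℤ, u (ℓ + 2 * (N : ℤ)) = u ℓ) ∧ ∑ ℓ ∈ idx N, u ℓ = 0}

/-- Backward difference `v'_ℓ = ε⁻¹ (v_ℓ - v_{ℓ-1})`, with `ε = 1/N`. -/
def bD (N : ℕ) (v : ℤ → ℝ) (ℓ : ℤ) : ℝ := (N : ℝ) * (v ℓ - v (ℓ - 1))

/-- Centered second difference `v''_ℓ = ε⁻² (v_{ℓ+1} - 2 v_ℓ + v_{ℓ-1})`. -/
def cD2 (N : ℕ) (v : ℤ → ℝ) (ℓ : ℤ) : ℝ := (N : ℝ) ^ 2 * (v (ℓ + 1) - 2 * v ℓ + v (ℓ - 1))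

/-- Weighted ℓ²-norm. -/
def nl2 (N : ℕ) (v : ℤ → ℝ) : ℝ := Real.sqrt ((N : ℝ)⁻¹ * ∑ ℓ ∈ idx N, (v ℓ) ^ 2)

/-- Weighted ℓ¹-norm. -/
def nl1 (N : ℕ) (v : ℤ → ℝ) : ℝ := (N : ℝ)⁻¹ * ∑ ℓ ∈ idx N, |v ℓ|

/-- ℓ∞-norm over one period. -/
def nlinf (N : ℕ) (v : ℤ → ℝ) : ℝ := ⨆ ℓ : {ℓ : ℤ // ℓ ∈ idx N}, |v ℓ.1|

/-- Weighted ℓ²-inner product. -/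
def iprod (N : ℕ) (u v : ℤ → ℝ) : ℝ := (N : ℝ)⁻¹ * ∑ ℓ ∈ idx N, u ℓ * v ℓ

/-- The uniform deformation `(y_F)_ℓ = F ℓ ε`. -/
def yF (N : ℕ) (F : ℝ) : ℤ → ℝ := fun ℓ => F * (ℓ : ℝ) * (N : ℝ)⁻¹

/-- First variation `E'(y)[u]`. -/
def dE (E : (ℤ → ℝ) → ℝ) (y u : ℤ → ℝ) : ℝ := deriv (fun t : ℝ => E (y + t • u)) 0

/-- Second variation `E''(y)[u,v]`. -/
def d2E (E : (ℤ → ℝ) → ℝ) (y u v : ℤ → ℝ) : ℝ :=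
  deriv (fun s : ℝ => deriv (fun t : ℝ => E (y + s • u + t • v)) 0) 0

/-- The atomistic energy. -/
def Ea (N : ℕ) (φ : ℝ → ℝ) (y : ℤ → ℝ) : ℝ :=
  (N : ℝ)⁻¹ * ∑ ℓ ∈ idx N, (φ (bD N y ℓ) + φ (bD N y ℓ + bD N y (ℓ + 1)))

/-- The local QC (continuum) energy. -/
def Eqcl (N : ℕ) (φ : ℝ → ℝ) (y : ℤ → ℝ) : ℝ :=
  (N : ℝ)⁻¹ * ∑ ℓ ∈ idx N, (φ (bD N y ℓ) + φ (2 * bD N y ℓ))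

/-- The QNL atomistic region `{-K-1, ..., K+1}`. -/
def aQnl (K : ℕ) : Finset ℤ := Finset.Icc (-(K : ℤ) - 1) ((K : ℤ) + 1)

/-- The quasi-nonlocal QC energy. -/
def Eqnl (N K : ℕ) (φ : ℝ → ℝ) (y : ℤ → ℝ) : ℝ :=
  (N : ℝ)⁻¹ * ((∑ ℓ ∈ idx N, φ (bD N y ℓ))
    + (∑ ℓ ∈ aQnl K, φ (bD N y ℓ + bD N y (ℓ + 1)))
    + ∑ ℓ ∈ idx N \ aQnl K, (φ (2 * bD N y ℓ) + φ (2 * bD N y (ℓ + 1))) / 2)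

/-- The QCE atomistic region `{-K, ..., K}`. -/
def aQce (K : ℕ) : Finset ℤ := Finset.Icc (-(K : ℤ)) (K : ℤ)

/-- Atomistic energy contribution of atom ℓ. -/
def eAtom (N : ℕ) (φ : ℝ → ℝ) (y : ℤ → ℝ) (ℓ : ℤ) : ℝ :=
  (φ (bD N y ℓ) + φ (bD N y (ℓ + 1)) + φ (bD N y (ℓ - 1) + bD N y ℓ)
    + φ (bD N y (ℓ + 1) + bD N y (ℓ + 2))) / 2

/-- Continuum energy contribution of atom ℓ. -/
def eCont (N : ℕ) (φ : ℝ → ℝ) (y : ℤ → ℝ) (ℓ : ℤ) : ℝ :=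
  (φ (bD N y ℓ) + φ (bD N y (ℓ + 1)) + φ (2 * bD N y ℓ) + φ (2 * bD N y (ℓ + 1))) / 2

/-- The energy-based QC energy. -/
def Eqce (N K : ℕ) (φ : ℝ → ℝ) (y : ℤ → ℝ) : ℝ :=
  (N : ℝ)⁻¹ * ((∑ ℓ ∈ idx N \ aQce K, eCont N φ y ℓ) + ∑ ℓ ∈ aQce K, eAtom N φ y ℓ)

/-- The prescribed backward difference `ĝ'` of the ghost-force corrector. -/
def ghatD (K : ℕ) (ℓ : ℤ) : ℝ :=
  if ℓ = -(K : ℤ) - 1 ∨ ℓ = (K : ℤ) + 2 then -(1 / 2)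
  else if ℓ = -(K : ℤ) + 1 ∨ ℓ = (K : ℤ) then 1 / 2 else 0

/-- `μ_ε = 2 sin(π ε / 2) / ε` with `ε = 1/N`. -/
def muEps (N : ℕ) : ℝ := 2 * Real.sin (Real.pi * (N : ℝ)⁻¹ / 2) / (N : ℝ)⁻¹

/-- The `𝒰^{-1,∞}`-norm of a functional `T` on 𝒰. -/
def dualNorm (N : ℕ) (T : (ℤ → ℝ) → ℝ) : ℝ :=
  sSup {r : ℝ | ∃ v ∈ uSet N, nl1 N (bD N v) = 1 ∧ r = T v}

/-!
Along the ray `r ↦ y_F + r • u` every nearest-neighbour bond is `F + r u'_ℓ` and every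
next-nearest-neighbour bond is `2F + r (u'_ℓ + u'_{ℓ+1})`, so the second variation is
`ε ∑ (φ''(F) |u'_ℓ|² + φ''(2F) |u'_ℓ + u'_{ℓ+1}|²)`. The parallelogram identity
`|a + b|² = 2|a|² + 2|b|² - |b - a|²` with `u'_{ℓ+1} - u'_ℓ = ε u''_ℓ`, together with
`∑ |u'_{ℓ+1}|² = ∑ |u'_ℓ|²` by periodicity, turns this into the claimed formula.
-/

theorem Finset.sum_Icc_comp_add_one_of_eq {M : Type*} [AddCommMonoid M] {f : ℤ → M} {a b : ℤ}
    (h : f (b + 1) = f a) : ∑ i ∈ Icc a b, f (i + 1) = ∑ i ∈ Icc a b, f i := by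
  rcases lt_or_ge b a with hba | hab
  · simp [Icc_eq_empty_of_lt hba]
  have hshift : ∑ i ∈ Icc a b, f (i + 1) = ∑ i ∈ Icc (a + 1) (b + 1), f i := by
    rw [← map_add_right_Icc, sum_map]; rfl
  rw [hshift, ← insert_Icc_right_eq_Icc_add_one (by omega), ← insert_Icc_add_one_left_eq_Icc hab,
    sum_insert (by simp), sum_insert (by simp), h, add_comm]

lemma deriv_comp_const_add_mul (φ : ℝ → ℝ) (c a : ℝ) :
    deriv (fun r => φ (c + a * r)) = fun r => a * deriv φ (c + a * r) := by
  funext r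
  rw [deriv_comp_mul_left (f := fun z => φ (c + z)), deriv_comp_const_add, smul_eq_mul]

lemma iteratedDeriv_two_comp_const_add_mul (φ : ℝ → ℝ) (c a x : ℝ) :
    iteratedDeriv 2 (fun r => φ (c + a * r)) x = a ^ 2 * iteratedDeriv 2 φ (c + a * x) := by
  simp only [iteratedDeriv_eq_iterate, Function.iterate_succ, Function.iterate_zero,
    Function.comp_apply, Function.id_def, deriv_comp_const_add_mul, deriv_const_mul_field']
  ring

lemma iteratedDeriv_two_eq_deriv_deriv {𝕜 F : Type*} [NontriviallyNormedField 𝕜]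
    [NormedAddCommGroup F] [NormedSpace 𝕜 F] (f : 𝕜 → F) :
    iteratedDeriv 2 f = deriv (deriv f) := by
  simp only [iteratedDeriv_succ, iteratedDeriv_zero]

lemma ContDiffAt.comp_const_add_mul {n : WithTop ℕ∞} {φ : ℝ → ℝ} {c : ℝ}
    (hφ : ContDiffAt ℝ n φ c) (a : ℝ) : ContDiffAt ℝ n (fun r => φ (c + a * r)) 0 :=
  (by simpa using hφ : ContDiffAt ℝ n φ (c + a * 0)).comp 0 (by fun_prop)

lemma sum_idx_comp_add_one {M : Type*} [AddCommMonoid M] {N : ℕ} {f : ℤ → M}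
    (hf : Function.Periodic f (2 * N)) : ∑ ℓ ∈ idx N, f (ℓ + 1) = ∑ ℓ ∈ idx N, f ℓ :=
  sum_Icc_comp_add_one_of_eq <| by convert hf (-(N : ℤ) + 1) using 2; ring

lemma periodic_bD {N : ℕ} {u : ℤ → ℝ} (hu : Function.Periodic u (2 * N)) :
    Function.Periodic (bD N u) (2 * N) :=
  fun ℓ => by rw [bD, bD, hu ℓ, add_sub_right_comm, hu (ℓ - 1)]

lemma cD2_eq (N : ℕ) (u : ℤ → ℝ) (ℓ : ℤ) :
    cD2 N u ℓ = N * (bD N u (ℓ + 1) - bD N u ℓ) := by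
  simp only [cD2, bD, add_sub_cancel_right]
  ring

lemma nl2_sq (N : ℕ) (v : ℤ → ℝ) : nl2 N v ^ 2 = (N : ℝ)⁻¹ * ∑ ℓ ∈ idx N, v ℓ ^ 2 :=
  Real.sq_sqrt (by positivity)

lemma sum_sq_bD_add_bD {N : ℕ} (hN : N ≠ 0) {u : ℤ → ℝ} (hu : Function.Periodic u (2 * N)) :
    ∑ ℓ ∈ idx N, (bD N u ℓ + bD N u (ℓ + 1)) ^ 2
      = 4 * ∑ ℓ ∈ idx N, bD N u ℓ ^ 2 - (N : ℝ)⁻¹ ^ 2 * ∑ ℓ ∈ idx N, cD2 N u ℓ ^ 2 := by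
  have hshift : ∑ ℓ ∈ idx N, bD N u (ℓ + 1) ^ 2 = ∑ ℓ ∈ idx N, bD N u ℓ ^ 2 :=
    sum_idx_comp_add_one ((periodic_bD hu).comp (· ^ 2))
  have hpointwise : ∀ ℓ, (bD N u ℓ + bD N u (ℓ + 1)) ^ 2
      = 2 * bD N u ℓ ^ 2 + 2 * bD N u (ℓ + 1) ^ 2 - (N : ℝ)⁻¹ ^ 2 * cD2 N u ℓ ^ 2 := fun ℓ => by
    rw [cD2_eq]
    field_simp
    ring
  simp only [hpointwise, sum_sub_distrib, sum_add_distrib, ← mul_sum, hshift]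
  ring

lemma d2E_self (E : (ℤ → ℝ) → ℝ) (y u : ℤ → ℝ) :
    d2E E y u u = iteratedDeriv 2 (fun r : ℝ => E (y + r • u)) 0 := by
  have hray : ∀ s t : ℝ, y + s • u + t • u = y + (t + s) • u := fun s t => by
    rw [add_assoc, ← add_smul, add_comm s]
  simp only [d2E, hray, deriv_comp_add_const (f := fun r => E (y + r • u)), zero_add,
    iteratedDeriv_eq_iterate, Function.iterate_succ, Function.iterate_zero, Function.comp_apply,
    Function.id_def]

lemma bD_yF_add_smul {N : ℕ} (hN : N ≠ 0) (F r : ℝ) (u : ℤ → ℝ) (ℓ : ℤ) :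
    bD N (yF N F + r • u) ℓ = F + bD N u ℓ * r := by
  simp only [bD, yF, Pi.add_apply, Pi.smul_apply, smul_eq_mul]
  push_cast
  field_simp
  ring

lemma Ea_yF_add_smul {N : ℕ} (hN : N ≠ 0) (φ : ℝ → ℝ) (F r : ℝ) (u : ℤ → ℝ) :
    Ea N φ (yF N F + r • u) = (N : ℝ)⁻¹ * ∑ ℓ ∈ idx N,
      (φ (F + bD N u ℓ * r) + φ (2 * F + (bD N u ℓ + bD N u (ℓ + 1)) * r)) := by
  simp only [Ea, bD_yF_add_smul hN]
  congr 1
  refine sum_congr rfl fun ℓ _ => ?_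
  ring_nf

lemma iteratedDeriv_two_Ea_yF_add_smul {N : ℕ} (hN : N ≠ 0) {φ : ℝ → ℝ}
    (hφ : ContDiffOn ℝ 2 φ (Set.Ioi 0)) {F : ℝ} (hF : 0 < F) (u : ℤ → ℝ) :
    iteratedDeriv 2 (fun r : ℝ => Ea N φ (yF N F + r • u)) 0 = (N : ℝ)⁻¹ * ∑ ℓ ∈ idx N,
      (iteratedDeriv 2 φ F * bD N u ℓ ^ 2
        + iteratedDeriv 2 φ (2 * F) * (bD N u ℓ + bD N u (ℓ + 1)) ^ 2) := by
  have hφF : ContDiffAt ℝ 2 φ F := hφ.contDiffAt (Ioi_mem_nhds hF)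
  have hφ2F : ContDiffAt ℝ 2 φ (2 * F) := hφ.contDiffAt (Ioi_mem_nhds (by positivity))
  simp_rw [Ea_yF_add_smul hN, iteratedDeriv_const_mul_field]
  rw [iteratedDeriv_fun_sum fun ℓ _ =>
    (hφF.comp_const_add_mul _).add (hφ2F.comp_const_add_mul _)]
  congr 1
  refine sum_congr rfl fun ℓ _ => ?_
  rw [iteratedDeriv_fun_add (hφF.comp_const_add_mul _) (hφ2F.comp_const_add_mul _),
    iteratedDeriv_two_comp_const_add_mul, iteratedDeriv_two_comp_const_add_mul]
  simp only [mul_zero, add_zero]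
  ring

theorem stmt1 (N : ℕ) (hN : 2 ≤ N) (φ : ℝ → ℝ)
    (hφ : ContDiffOn ℝ 2 φ (Set.Ioi 0)) (F : ℝ) (hF : 0 < F) :
    ∀ u ∈ uSet N,
      d2E (Ea N φ) (yF N F) u u
        = (deriv (deriv φ) F + 4 * deriv (deriv φ) (2 * F)) * (nl2 N (bD N u)) ^ 2
          - (N : ℝ)⁻¹ ^ 2 * deriv (deriv φ) (2 * F) * (nl2 N (cD2 N u)) ^ 2 := by
  rintro u ⟨hu, -⟩
  have hN0 : N ≠ 0 := by omega
  rw [d2E_self, iteratedDeriv_two_Ea_yF_add_smul hN0 hφ hF, sum_add_distrib, ← mul_sum,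
    ← mul_sum, sum_sq_bD_add_bD hN0 hu, nl2_sq, nl2_sq, iteratedDeriv_two_eq_deriv_deriv]
  ring
end
end

section
/- The infimum of ‖ψ''‖_{ℓ²_ε} / ‖ψ'‖_{ℓ²_ε} over all ψ ∈ 𝒰 ∖ {0} equals μ_ε = 2 sin(πε/2)/ε, and the infimum is attained by the element ψ ∈ 𝒰 whose backward difference is ψ'_ℓ = sin(ε ℓ π). -/
open Finset Real

noncomputable section

/-!
For `ψ ∈ 𝒰` the difference `φ = ψ'` is again `2N`-periodic with zero mean, and `ψ''` is `ε⁻¹`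
times the forward difference `φ(· + 1) - φ`. In the discrete Fourier basis of the period, the
forward difference multiplies the `k`-th coefficient by `ζ⁻ᵏ - 1`, of modulus
`2 sin(πk/2N) ≥ 2 sin(π/2N)` for `k ≠ 0`, while the coefficient `k = 0` is the vanishing mean.
Parseval's identity then gives the discrete Wirtinger inequality
`‖φ(· + 1) - φ‖ ≥ 2 sin(π/2N) ‖φ‖`, i.e. `‖ψ''‖ ≥ μ_ε ‖ψ'‖`. The first mode `φ_ℓ = sin(πℓ/N)`
attains equality by explicit trigonometric sums, and it is the difference of
`ψ_ℓ = -cos(π(ℓ + 1/2)/N) / (2N sin(π/2N))`, which lies in `𝒰`.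
-/

namespace Function.Periodic

variable {β : Type*} {g : ℤ → β} {M : ℤ}

theorem sum_Ico_comp_add_one [AddCommMonoid β] (hg : Periodic g M) (a : ℤ) :
    ∑ ℓ ∈ Ico a (a + M), g (ℓ + 1) = ∑ ℓ ∈ Ico a (a + M), g ℓ := by
  rcases lt_or_ge M 1 with hM | hM
  · simp [Ico_eq_empty_of_le (by omega : a + M ≤ a)]
  have hshift : Ico (a + 1) (a + M + 1) = insert (a + M) (Ico (a + 1) (a + M)) := by
    ext; simp only [mem_Ico, mem_insert]; omega
  rw [sum_Ico_add', hshift, ← insert_Ico_add_one_left_eq_Ico (by omega : a < a + M),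
    sum_insert (by simp), sum_insert (by simp), hg]

theorem sum_Ico_sub_comp_sub_one [AddCommGroup β] (hg : Periodic g M) (a : ℤ) :
    ∑ ℓ ∈ Ico a (a + M), (g ℓ - g (ℓ - 1)) = 0 := by
  have := (hg.sub_const 1).sum_Ico_comp_add_one a
  simp only [add_sub_cancel_right] at this
  rw [sum_sub_distrib, this, sub_self]

end Function.Periodic

open Complex in
def primRoot (M : ℕ) : ℂ := exp (2 * π * I / M)

section RootsOfUnity

variable {M : ℕ}

theorem primRoot_ne_zero (M : ℕ) : primRoot M ≠ 0 := Complex.exp_ne_zero _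

theorem isPrimitiveRoot_primRoot (hM : M ≠ 0) : IsPrimitiveRoot (primRoot M) M :=
  Complex.isPrimitiveRoot_exp M hM

theorem primRoot_zpow (M : ℕ) (j : ℤ) :
    primRoot M ^ j = Complex.exp ((2 * π * j / M : ℝ) * Complex.I) := by
  rw [primRoot, ← Complex.exp_int_mul]
  push_cast
  ring_nf

theorem primRoot_zpow_mul_self (M : ℕ) (j : ℤ) : primRoot M ^ (j * M) = 1 := by
  rcases eq_or_ne M 0 with rfl | hM
  · simp
  rw [primRoot_zpow, ← Complex.exp_int_mul_two_pi_mul_I j]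
  push_cast
  field_simp

theorem primRoot_zpow_mul_periodic (M : ℕ) (j : ℤ) :
    Function.Periodic (fun ℓ : ℤ => primRoot M ^ (j * ℓ)) M := fun ℓ => by
  dsimp only
  rw [mul_add, zpow_add₀ (primRoot_ne_zero M), primRoot_zpow_mul_self, mul_one]

theorem sum_Ico_primRoot_zpow_mul (a j : ℤ) :
    ∑ ℓ ∈ Ico a (a + M), primRoot M ^ (j * ℓ) = if (M : ℤ) ∣ j then (M : ℂ) else 0 := by
  split_ifs with hj
  · obtain ⟨t, rfl⟩ := hj
    have hterm : ∀ ℓ : ℤ, primRoot M ^ (M * t * ℓ) = 1 := fun ℓ => by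
      rw [show (M : ℤ) * t * ℓ = t * ℓ * M by ring, primRoot_zpow_mul_self]
    simp [hterm]
  rcases eq_or_ne M 0 with rfl | hM
  · simp
  have hζ : primRoot M ^ j ≠ 1 := by
    rwa [Ne, (isPrimitiveRoot_primRoot hM).zpow_eq_one_iff_dvd]
  -- Shifting the window multiplies the sum by `primRoot M ^ j ≠ 1`, and by periodicity it
  -- does not change it.
  have hfix := (primRoot_zpow_mul_periodic M j).sum_Ico_comp_add_one a
  simp only [mul_add, mul_one, zpow_add₀ (primRoot_ne_zero M), ← sum_mul] at hfix
  by_contra hS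
  exact hζ ((mul_eq_left₀ hS).mp hfix)

theorem sum_Ico_cos_add_mul {j : ℤ} (hj : ¬ (M : ℤ) ∣ j) (a : ℤ) (c : ℝ) :
    ∑ ℓ ∈ Ico a (a + M), cos (c + 2 * π * j / M * ℓ) = 0 := by
  have hterm : ∀ ℓ : ℤ, cos (c + 2 * π * j / M * ℓ)
      = (Complex.exp (c * Complex.I) * primRoot M ^ (j * ℓ)).re := fun ℓ => by
    rw [primRoot_zpow, ← Complex.exp_add, ← add_mul, ← Complex.ofReal_add,
      Complex.exp_ofReal_mul_I_re]
    push_cast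
    ring_nf
  simp only [hterm, ← Complex.re_sum, ← mul_sum, sum_Ico_primRoot_zpow_mul, if_neg hj,
    mul_zero, Complex.zero_re]

theorem sum_Ico_cos_sq {j : ℤ} (hj : ¬ (M : ℤ) ∣ 2 * j) (a : ℤ) (c : ℝ) :
    ∑ ℓ ∈ Ico a (a + M), cos (c + 2 * π * j / M * ℓ) ^ 2 = M / 2 := by
  have hterm : ∀ ℓ : ℤ, cos (c + 2 * π * j / M * ℓ) ^ 2
      = 1 / 2 + cos (2 * c + 2 * π * (2 * j : ℤ) / M * ℓ) / 2 := fun ℓ => by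
    rw [cos_sq]
    push_cast
    ring_nf
  simp only [hterm, sum_add_distrib, ← sum_div, sum_Ico_cos_add_mul hj, sum_const, Int.card_Ico]
  simp

theorem sum_Ico_sin_sq {j : ℤ} (hj : ¬ (M : ℤ) ∣ 2 * j) (a : ℤ) :
    ∑ ℓ ∈ Ico a (a + M), sin (2 * π * j / M * ℓ) ^ 2 = M / 2 := by
  have := sum_Ico_cos_sq hj a 0
  simp only [zero_add] at this
  simp only [sin_sq, sum_sub_distrib, this, sum_const, Int.card_Ico, add_sub_cancel_left,
    Int.toNat_natCast, nsmul_eq_mul, mul_one]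
  ring

theorem sum_Ico_sin_sub_sin_sq {j : ℤ} (hj : ¬ (M : ℤ) ∣ 2 * j) (a : ℤ) :
    ∑ ℓ ∈ Ico a (a + M), (sin (2 * π * j / M * (ℓ + 1 : ℤ)) - sin (2 * π * j / M * ℓ)) ^ 2
      = 2 * M * sin (π * j / M) ^ 2 := by
  have hterm : ∀ ℓ : ℤ, (sin (2 * π * j / M * (ℓ + 1 : ℤ)) - sin (2 * π * j / M * ℓ)) ^ 2
      = 4 * sin (π * j / M) ^ 2 * cos (π * j / M + 2 * π * j / M * ℓ) ^ 2 := fun ℓ => by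
    rw [sin_sub_sin]
    push_cast
    ring_nf
  simp only [hterm, ← mul_sum, sum_Ico_cos_sq hj]
  ring

end RootsOfUnity

def dftIco (M : ℕ) (a : ℤ) (φ : ℤ → ℝ) (k : ℤ) : ℂ :=
  ∑ ℓ ∈ Ico a (a + M), primRoot M ^ (k * ℓ) * φ ℓ

section DFT

variable {M : ℕ}

theorem conj_primRoot_zpow (M : ℕ) (j : ℤ) :
    (starRingEnd ℂ) (primRoot M ^ j) = primRoot M ^ (-j) := by
  rw [primRoot_zpow, primRoot_zpow, ← Complex.exp_conj, map_mul, Complex.conj_ofReal,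
    Complex.conj_I]
  push_cast
  ring_nf

theorem dvd_sub_iff_eq_of_mem_Ico {a ℓ m : ℤ} (hℓ : ℓ ∈ Ico a (a + M)) (hm : m ∈ Ico a (a + M)) :
    (M : ℤ) ∣ ℓ - m ↔ ℓ = m := by
  refine ⟨fun h => ?_, fun h => by rw [h, sub_self]; exact dvd_zero _⟩
  rw [mem_Ico] at hℓ hm
  exact sub_eq_zero.mp (Int.eq_zero_of_abs_lt_dvd h (by rw [abs_lt]; omega))

theorem sum_normSq_dftIco (a b : ℤ) (φ : ℤ → ℝ) :
    ∑ k ∈ Ico b (b + M), Complex.normSq (dftIco M a φ k)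
      = M * ∑ ℓ ∈ Ico a (a + M), φ ℓ ^ 2 := by
  apply Complex.ofReal_injective
  calc ((∑ k ∈ Ico b (b + M), Complex.normSq (dftIco M a φ k) : ℝ) : ℂ)
      = ∑ ℓ ∈ Ico a (a + M), ∑ m ∈ Ico a (a + M),
          (φ ℓ * φ m : ℂ) * ∑ k ∈ Ico b (b + M), primRoot M ^ ((ℓ - m) * k) := by
        simp only [Complex.ofReal_sum, ← Complex.mul_conj, dftIco, map_sum, map_mul,
          conj_primRoot_zpow, Complex.conj_ofReal]
        simp_rw [sum_mul_sum, mul_sum]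
        rw [sum_comm]
        refine sum_congr rfl fun ℓ _ => ?_
        rw [sum_comm]
        refine sum_congr rfl fun m _ => sum_congr rfl fun k _ => ?_
        rw [show (ℓ - m) * k = k * ℓ + -(k * m) by ring, zpow_add₀ (primRoot_ne_zero M)]
        ring
    _ = ∑ ℓ ∈ Ico a (a + M), ∑ m ∈ Ico a (a + M), if ℓ = m then (M * φ ℓ ^ 2 : ℂ) else 0 := by
        refine sum_congr rfl fun ℓ hℓ => sum_congr rfl fun m hm => ?_
        simp only [sum_Ico_primRoot_zpow_mul, dvd_sub_iff_eq_of_mem_Ico hℓ hm]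
        split_ifs with h
        · rw [h]
          ring
        · rw [mul_zero]
    _ = _ := by
        push_cast
        rw [mul_sum]
        exact sum_congr rfl fun ℓ hℓ => by rw [sum_ite_eq, if_pos hℓ]

theorem dftIco_comp_add_one_sub {φ : ℤ → ℝ} (hφ : Function.Periodic φ M) (a k : ℤ) :
    dftIco M a (fun ℓ => φ (ℓ + 1) - φ ℓ) k = (primRoot M ^ (-k) - 1) * dftIco M a φ k := by
  have hshift := (((primRoot_zpow_mul_periodic M k).sub_const 1).mul
    (hφ.comp ((↑) : ℝ → ℂ))).sum_Ico_comp_add_one a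
  simp only [Pi.mul_apply, Function.comp_apply, add_sub_cancel_right] at hshift
  simp only [dftIco, Complex.ofReal_sub, mul_sub, sum_sub_distrib, hshift, sub_mul, one_mul,
    mul_sum]
  congr 1
  refine sum_congr rfl fun ℓ _ => ?_
  rw [show k * ℓ - k * 1 = -k + k * ℓ by ring, zpow_add₀ (primRoot_ne_zero M), mul_assoc]

theorem normSq_primRoot_zpow_sub_one (M : ℕ) (j : ℤ) :
    Complex.normSq (primRoot M ^ j - 1) = 4 * sin (π * j / M) ^ 2 := by
  set θ := π * j / M
  rw [primRoot_zpow, show 2 * π * j / M = 2 * θ by ring, Complex.normSq_apply]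
  simp only [Complex.sub_re, Complex.sub_im, Complex.exp_ofReal_mul_I_re,
    Complex.exp_ofReal_mul_I_im, Complex.one_re, Complex.one_im, cos_two_mul, sin_two_mul]
  linear_combination (4 * cos θ ^ 2 - 4) * sin_sq_add_cos_sq θ

theorem sin_sq_pi_div_le {k : ℤ} (hk : 0 < k) (hkM : k < M) :
    sin (π / M) ^ 2 ≤ sin (π * k / M) ^ 2 := by
  have hM : (0 : ℝ) < M := by exact_mod_cast (hk.trans hkM)
  have hmono : ∀ i : ℤ, 0 < i → 2 * i ≤ M → sin (π / M) ≤ sin (π * i / M) := fun i hi hiM => by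
    have hi' : (1 : ℝ) ≤ i := by exact_mod_cast hi
    have hiM' : 2 * (i : ℝ) ≤ M := by exact_mod_cast hiM
    apply sin_le_sin_of_le_of_le_pi_div_two
    · linarith [div_pos pi_pos hM, pi_pos]
    · rw [div_le_iff₀ hM]; nlinarith [pi_pos]
    · rw [div_le_div_iff_of_pos_right hM]; nlinarith [pi_pos]
  have hsin : sin (π / M) ≤ sin (π * k / M) := by
    rcases le_or_gt (2 * k) M with h | h
    · exact hmono k hk h
    · rw [← sin_pi_sub (π * k / M),
        show π - π * k / M = π * (M - k : ℤ) / M by push_cast; field_simp]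
      exact hmono _ (by omega) (by omega)
  exact pow_le_pow_left₀ (sin_nonneg_of_nonneg_of_le_pi (div_pos pi_pos hM).le
    (div_le_self pi_pos.le (by exact_mod_cast (hk.trans hkM)))) hsin 2

end DFT

theorem Function.Periodic.four_mul_sin_sq_mul_sum_sq_le {M : ℕ} {φ : ℤ → ℝ}
    (hφ : Function.Periodic φ M) {a : ℤ} (hmean : ∑ ℓ ∈ Ico a (a + M), φ ℓ = 0) :
    4 * sin (π / M) ^ 2 * ∑ ℓ ∈ Ico a (a + M), φ ℓ ^ 2
      ≤ ∑ ℓ ∈ Ico a (a + M), (φ (ℓ + 1) - φ ℓ) ^ 2 := by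
  have hterm : ∀ k ∈ Ico (0 : ℤ) (0 + M), 4 * sin (π / M) ^ 2 * Complex.normSq (dftIco M a φ k)
      ≤ Complex.normSq (dftIco M a (fun ℓ => φ (ℓ + 1) - φ ℓ) k) := fun k hk => by
    rw [dftIco_comp_add_one_sub hφ, Complex.normSq_mul, normSq_primRoot_zpow_sub_one]
    rw [mem_Ico, zero_add] at hk
    rcases hk.1.eq_or_lt with rfl | hk0
    · simp [dftIco, ← Complex.ofReal_sum, hmean]
    · have := sin_sq_pi_div_le hk0 hk.2
      rw [Int.cast_neg, mul_neg, neg_div, sin_neg, neg_sq]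
      gcongr
      exact Complex.normSq_nonneg _
  have hsum := sum_le_sum hterm
  rw [← mul_sum, sum_normSq_dftIco, sum_normSq_dftIco] at hsum
  rcases eq_or_ne M 0 with rfl | hM
  · simp
  exact le_of_mul_le_mul_left (by linarith) (by positivity : (0 : ℝ) < M)

section Displacements

variable {N : ℕ}

theorem idx_eq_Ico (N : ℕ) : idx N = Ico (1 - (N : ℤ)) (1 - N + (2 * N : ℕ)) := by
  ext
  simp only [idx, mem_Icc, mem_Ico]
  omega

theorem periodic_of_mem_uSet {u : ℤ → ℝ} (hu : u ∈ uSet N) :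
    Function.Periodic u (2 * N : ℕ) := fun ℓ => by
  push_cast
  exact hu.1 ℓ

theorem bD_periodic {v : ℤ → ℝ} {c : ℤ} (hv : Function.Periodic v c) :
    Function.Periodic (bD N v) c := fun ℓ => by
  rw [bD, bD, add_sub_right_comm, hv, hv]

theorem sum_idx_bD_eq_zero {v : ℤ → ℝ} (hv : Function.Periodic v (2 * N : ℕ)) :
    ∑ ℓ ∈ idx N, bD N v ℓ = 0 := by
  simp only [idx_eq_Ico, bD, ← mul_sum, hv.sum_Ico_sub_comp_sub_one, mul_zero]

theorem cD2_eq_mul_sub_bD (N : ℕ) (v : ℤ → ℝ) (ℓ : ℤ) :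
    cD2 N v ℓ = N * (bD N v (ℓ + 1) - bD N v ℓ) := by
  rw [cD2, bD, bD, add_sub_cancel_right]
  ring

theorem eq_zero_of_mem_uSet_of_bD_eq_zero (hN : N ≠ 0) {ψ : ℤ → ℝ} (hψ : ψ ∈ uSet N)
    (hbD : ∀ ℓ ∈ idx N, bD N ψ ℓ = 0) : ψ = 0 := by
  have hper := periodic_of_mem_uSet hψ
  have hstep : Function.Periodic ψ 1 := fun ℓ => by
    obtain ⟨m, hm, hrep⟩ := (bD_periodic hper).exists_mem_Ico (by omega) (ℓ + 1) (1 - N)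
    rw [← Finset.coe_Ico, ← idx_eq_Ico, Finset.mem_coe] at hm
    have := hrep.trans (hbD m hm)
    rw [bD, add_sub_cancel_right] at this
    simpa [sub_eq_zero, hN] using this
  have hconst : ∀ ℓ, ψ ℓ = ψ 0 := fun ℓ => by simpa using hstep.int_mul ℓ 0
  have hcard : (idx N).card ≠ 0 := by
    rw [idx, Int.card_Icc]
    omega
  have hsum := hψ.2
  simp only [hconst, sum_const, nsmul_eq_mul] at hsum
  have h0 : ψ 0 = 0 := (mul_eq_zero.mp hsum).resolve_left (Nat.cast_ne_zero.mpr hcard)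
  exact funext fun ℓ => (hconst ℓ).trans h0

theorem muEps_eq (N : ℕ) : muEps N = 2 * N * sin (π / (2 * N : ℕ)) := by
  rw [muEps, div_inv_eq_mul]
  push_cast
  ring_nf

theorem muEps_nonneg (N : ℕ) : 0 ≤ muEps N := by
  rcases Nat.eq_zero_or_pos N with rfl | hN
  · simp [muEps]
  rw [muEps_eq]
  have := sin_nonneg_of_nonneg_of_le_pi (by positivity)
    (div_le_self pi_pos.le (by norm_cast; omega : (1 : ℝ) ≤ (2 * N : ℕ)))
  positivity

theorem muEps_le_div {ψ : ℤ → ℝ} (hN : N ≠ 0) (hψ : ψ ∈ uSet N) (hψ0 : ψ ≠ 0) :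
    muEps N ≤ nl2 N (cD2 N ψ) / nl2 N (bD N ψ) := by
  have hper := periodic_of_mem_uSet hψ
  have hW := (bD_periodic hper).four_mul_sin_sq_mul_sum_sq_le (a := 1 - N)
    (by rw [← idx_eq_Ico]; exact sum_idx_bD_eq_zero hper)
  rw [← idx_eq_Ico] at hW
  obtain ⟨m, hm, hm0⟩ : ∃ m ∈ idx N, bD N ψ m ≠ 0 := by
    by_contra! h
    exact hψ0 (eq_zero_of_mem_uSet_of_bD_eq_zero hN hψ h)
  have hpos : 0 < nl2 N (bD N ψ) := by
    refine sqrt_pos.mpr (mul_pos (by positivity) ?_)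
    exact sum_pos' (fun ℓ _ => sq_nonneg _) ⟨m, hm, by positivity⟩
  rw [le_div_iff₀ hpos, nl2, nl2, ← sqrt_sq (muEps_nonneg N), ← sqrt_mul (sq_nonneg _)]
  refine sqrt_le_sqrt ?_
  simp only [cD2_eq_mul_sub_bD, mul_pow, ← mul_sum, muEps_eq]
  calc _ = (N : ℝ) * (4 * sin (π / (2 * N : ℕ)) ^ 2 * ∑ ℓ ∈ idx N, bD N ψ ℓ ^ 2) := by
        field_simp
        ring
    _ ≤ N * ∑ ℓ ∈ idx N, (bD N ψ (ℓ + 1) - bD N ψ ℓ) ^ 2 := by gcongr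
    _ = _ := by field_simp

theorem div_eq_muEps_of_bD_eq_sin (hN : 2 ≤ N) {ψ : ℤ → ℝ}
    (hψ : ∀ ℓ : ℤ, bD N ψ ℓ = sin ((N : ℝ)⁻¹ * ℓ * π)) :
    nl2 N (cD2 N ψ) / nl2 N (bD N ψ) = muEps N := by
  have hj : ¬ ((2 * N : ℕ) : ℤ) ∣ 2 * 1 := fun h => by
    have := Int.le_of_dvd (by norm_num) h
    omega
  have harg : ∀ x : ℝ, (N : ℝ)⁻¹ * x * π = 2 * π * (1 : ℤ) / (2 * N : ℕ) * x := fun x => by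
    push_cast
    field_simp
  have hb : ∑ ℓ ∈ idx N, bD N ψ ℓ ^ 2 = N := by
    rw [idx_eq_Ico]
    simp only [hψ, harg, sum_Ico_sin_sq hj]
    push_cast
    ring
  have hc : ∑ ℓ ∈ idx N, cD2 N ψ ℓ ^ 2 = N ^ 2 * (4 * N * sin (π / (2 * N : ℕ)) ^ 2) := by
    rw [idx_eq_Ico]
    simp only [cD2_eq_mul_sub_bD, mul_pow, ← mul_sum, hψ, harg, sum_Ico_sin_sub_sin_sq hj]
    push_cast
    ring_nf
  have hN0 : (N : ℝ) ≠ 0 := by positivity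
  rw [nl2, nl2, hb, hc, inv_mul_cancel₀ hN0, sqrt_one, div_one,
    show (N : ℝ)⁻¹ * (N ^ 2 * (4 * N * sin (π / (2 * N : ℕ)) ^ 2)) = muEps N ^ 2 by
      rw [muEps_eq]; field_simp; ring]
  exact sqrt_sq (muEps_nonneg N)

end Displacements

def firstMode (N : ℕ) (ℓ : ℤ) : ℝ := -cos (π * (ℓ + 1 / 2) / N) / (2 * N * sin (π / (2 * N)))

section Displacements

variable {N : ℕ}

theorem bD_firstMode (hN : N ≠ 0) (ℓ : ℤ) : bD N (firstMode N) ℓ = sin ((N : ℝ)⁻¹ * ℓ * π) := by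
  have hN' : (1 : ℝ) ≤ N := by norm_cast; omega
  rw [bD, firstMode, firstMode, neg_div, neg_div, neg_sub_neg, div_sub_div_same, cos_sub_cos,
    show (π * ((ℓ - 1 : ℤ) + 1 / 2) / N + π * (ℓ + 1 / 2) / N) / 2 = (N : ℝ)⁻¹ * ℓ * π by
      push_cast; field_simp; ring,
    show (π * ((ℓ - 1 : ℤ) + 1 / 2) / N - π * (ℓ + 1 / 2) / N) / 2 = -(π / (2 * N)) by
      push_cast; field_simp; ring, sin_neg]
  have hs : sin (π / (2 * N)) ≠ 0 := (sin_pos_of_pos_of_lt_pi (by positivity)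
    ((div_lt_self pi_pos (by linarith)))).ne'
  generalize sin (π / (2 * N)) = s at hs ⊢
  field_simp

theorem firstMode_mem_uSet (hN : N ≠ 0) : firstMode N ∈ uSet N := by
  refine ⟨fun ℓ => ?_, ?_⟩
  · rw [firstMode, firstMode,
      show π * ((ℓ + 2 * N : ℤ) + 1 / 2) / N = π * (ℓ + 1 / 2) / N + 2 * π by
        push_cast; field_simp; ring,
      cos_add_two_pi]
  have hj : ¬ ((2 * N : ℕ) : ℤ) ∣ 1 := fun h => by
    have := Int.le_of_dvd one_pos h
    omega
  have harg : ∀ ℓ : ℤ, π * (ℓ + 1 / 2) / N = π / (2 * N) + 2 * π * (1 : ℤ) / (2 * N : ℕ) * ℓ :=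
    fun ℓ => by push_cast; field_simp; ring
  simp only [firstMode, harg, ← sum_div, sum_neg_distrib, idx_eq_Ico, sum_Ico_cos_add_mul hj,
    neg_zero, zero_div]

theorem firstMode_ne_zero (hN : 2 ≤ N) : firstMode N ≠ 0 := fun h => by
  have h1 := bD_firstMode (by omega : N ≠ 0) 1
  have hsin : 0 < sin ((N : ℝ)⁻¹ * (1 : ℤ) * π) := by
    have hN' : (2 : ℝ) ≤ N := by exact_mod_cast hN
    apply sin_pos_of_pos_of_lt_pi (by positivity)
    push_cast
    rw [mul_one, inv_mul_lt_iff₀ (by positivity)]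
    nlinarith [pi_pos]
  rw [h, bD] at h1
  simp only [Pi.zero_apply, sub_self, mul_zero] at h1
  exact hsin.ne h1

end Displacements

theorem stmt2 (N : ℕ) (hN : 2 ≤ N) :
    IsLeast {r : ℝ | ∃ ψ : ℤ → ℝ, ψ ∈ uSet N ∧ ψ ≠ 0 ∧
        r = nl2 N (cD2 N ψ) / nl2 N (bD N ψ)} (muEps N)
    ∧ ∀ ψ : ℤ → ℝ, ψ ∈ uSet N →
        (∀ ℓ : ℤ, bD N ψ ℓ = Real.sin ((N : ℝ)⁻¹ * (ℓ : ℝ) * Real.pi)) →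
        nl2 N (cD2 N ψ) / nl2 N (bD N ψ) = muEps N := by
  have hN0 : N ≠ 0 := by omega
  refine ⟨⟨⟨firstMode N, firstMode_mem_uSet hN0, firstMode_ne_zero hN,
    (div_eq_muEps_of_bD_eq_sin hN (bD_firstMode hN0)).symm⟩, ?_⟩,
    fun ψ _ hψ => div_eq_muEps_of_bD_eq_sin hN hψ⟩
  rintro r ⟨ψ, hψ, hψ0, rfl⟩
  exact muEps_le_div hN0 hψ hψ0
end
end
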